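/- (Semi-nondegeneracy of the Zakharov–Kuznetsov Hessian.) Let d ≥ 3 and set φ(ξ) := ξ¹ |ξ|² for ξ = (ξ¹,…,ξ^d) ∈ ℝ^d. Fix p, p₂ ∈ ℝ^d and define F : ℝ^d → ℝ by F(p₁) := φ(p) − φ(p₁) − φ(p₂) − φ(p − p₁ − p₂). Then for every p₁ ∈ ℝ^d, the Hessian matrix D²F(p₁) has rank at most 1 if and only if p₁ = −(p − p₁ − p₂), i.e. if and only if p₁ + p₃ = 0 where p₃ := p − p₁ − p₂; in particular, if p₁ + p₃ ≠ 0 then rank D²F(p₁) ≥ 2. -/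

import Mathlib

/-!
Write `p₃ = p - p₁ - p₂`. Since `p₃` is affine in `p₁` with slope `-1`, the Hessian of
`F(p₁) = φ(p) - φ(p₁) - φ(p₂) - φ(p₃)` is `-D²φ(p₁) - D²φ(p₃)`, and since `φ` is a cubic form,
`D²φ(x)` is linear in `x`, so `D²F(p₁) = -D²φ(s)` with `s = p₁ + p₃`. Explicitly
`D²φ(s) = 2 (s e₁ᵀ + e₁ sᵀ + s¹ I)`. This vanishes for `s = 0`. Otherwise a `2 × 2` minor is
nonzero: if `s¹ ≠ 0`, the one on two coordinates other than the first (here `d ≥ 3` is used),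
equal to `(s¹)²`; if `s¹ = 0` and `sᵏ ≠ 0`, the one on the coordinates `1, k`, equal to `-(sᵏ)²`.
-/

/-- The Zakharov–Kuznetsov dispersion symbol `φ(ξ) = ξ¹ |ξ|²` on `ℝ^d`. -/
noncomputable def phiZK (d : ℕ) (hd : 0 < d) (ξ : EuclideanSpace ℝ (Fin d)) : ℝ :=
  ξ ⟨0, hd⟩ * ‖ξ‖ ^ 2

/-- The Hessian matrix of a function `F : ℝ^d → ℝ` at a point `x`, with entries the second
partial derivatives `∂²F/∂ξⁱ∂ξʲ (x)`. -/
noncomputable def hessianMatrix (d : ℕ) (F : EuclideanSpace ℝ (Fin d) → ℝ)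
    (x : EuclideanSpace ℝ (Fin d)) : Matrix (Fin d) (Fin d) ℝ :=
  Matrix.of fun i j =>
    fderiv ℝ (fun y => fderiv ℝ F y (EuclideanSpace.single j 1)) x (EuclideanSpace.single i 1)

open scoped RealInnerProductSpace

section Calculus

variable {E : Type*} [NormedAddCommGroup E] [InnerProductSpace ℝ E]

theorem HasFDerivAt.comp_sub_sub {F : Type*} [NormedAddCommGroup F] [NormedSpace ℝ F]
    {g : E → F} {g' : E →L[ℝ] F} (p p₂ : E) {y : E} (hg : HasFDerivAt g g' (p - y - p₂)) :
    HasFDerivAt (fun q => g (p - q - p₂)) (-g') y := by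
  have hsub : HasFDerivAt (fun q : E => p - q - p₂) (-ContinuousLinearMap.id ℝ E) y := by
    simpa using ((hasFDerivAt_id y).const_sub p).sub_const p₂
  exact (hg.comp y hsub).congr_fderiv (by simp)

def resonance (f : E → ℝ) (p p₂ q : E) : ℝ := f p - f q - f p₂ - f (p - q - p₂)

variable {f : E → ℝ}

theorem fderiv_resonance_apply (hf : Differentiable ℝ f) (p p₂ y v : E) :
    fderiv ℝ (resonance f p p₂) y v = fderiv ℝ f (p - y - p₂) v - fderiv ℝ f y v := by
  have h : HasFDerivAt (resonance f p p₂) _ y :=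
    (((hf y).hasFDerivAt.const_sub (f p)).sub_const (f p₂)).sub
      ((hf _).hasFDerivAt.comp_sub_sub p p₂)
  rw [h.fderiv]
  simp only [sub_neg_eq_add, add_apply, neg_apply]
  ring

theorem fderiv_fderiv_resonance_apply (hf : Differentiable ℝ f) {v : E}
    (hf' : Differentiable ℝ fun y => fderiv ℝ f y v) (p p₂ x w : E) :
    fderiv ℝ (fun y => fderiv ℝ (resonance f p p₂) y v) x w =
      -fderiv ℝ (fun y => fderiv ℝ f y v) (p - x - p₂) w -
        fderiv ℝ (fun y => fderiv ℝ f y v) x w := by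
  have h : HasFDerivAt (fun y => fderiv ℝ f (p - y - p₂) v - fderiv ℝ f y v) _ x :=
    ((hf' _).hasFDerivAt.comp_sub_sub p p₂).sub (hf' x).hasFDerivAt
  simp_rw [fderiv_resonance_apply hf, h.fderiv]
  simp

variable (ℓ : E →L[ℝ] ℝ)

def cubicSymbol (y : E) : ℝ := ℓ y * ‖y‖ ^ 2

theorem hasFDerivAt_cubicSymbol (x : E) :
    HasFDerivAt (cubicSymbol ℓ) (‖x‖ ^ 2 • ℓ + (2 * ℓ x) • innerSL ℝ x) x := by
  refine (ℓ.hasFDerivAt.mul (hasStrictFDerivAt_norm_sq x).hasFDerivAt).congr_fderiv ?_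
  ext v
  simp only [add_apply, smul_apply, coe_innerSL_apply, nsmul_eq_mul, Nat.cast_ofNat, smul_eq_mul]
  ring

theorem differentiable_cubicSymbol : Differentiable ℝ (cubicSymbol ℓ) :=
  fun x => (hasFDerivAt_cubicSymbol ℓ x).differentiableAt

theorem fderiv_cubicSymbol_apply (y v : E) :
    fderiv ℝ (cubicSymbol ℓ) y v = ‖y‖ ^ 2 * ℓ v + 2 * ℓ y * ⟪y, v⟫ := by
  simp [(hasFDerivAt_cubicSymbol ℓ y).fderiv]

theorem hasFDerivAt_fderiv_cubicSymbol_apply (v x : E) :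
    HasFDerivAt (fun y => fderiv ℝ (cubicSymbol ℓ) y v)
      ((2 * ℓ v) • innerSL ℝ x + (2 * ⟪x, v⟫) • ℓ + (2 * ℓ x) • innerSL ℝ v) x := by
  simp_rw [fderiv_cubicSymbol_apply]
  refine (((hasStrictFDerivAt_norm_sq x).hasFDerivAt.mul_const (ℓ v)).add
    ((ℓ.hasFDerivAt.const_mul 2).mul
      ((hasFDerivAt_id x).inner ℝ (hasFDerivAt_const v x)))).congr_fderiv ?_
  ext w
  simp only [id_eq, real_inner_comm, add_apply, smul_apply, coe_innerSL_apply, nsmul_eq_mul,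
    Nat.cast_ofNat, smul_eq_mul, ContinuousLinearMap.comp_apply, ContinuousLinearMap.prod_apply,
    ContinuousLinearMap.id_apply, zero_apply, fderivInnerCLM_apply, inner_zero_right, zero_add]
  ring

theorem fderiv_fderiv_resonance_cubicSymbol_apply (p p₂ x v w : E) :
    fderiv ℝ (fun y => fderiv ℝ (resonance (cubicSymbol ℓ) p p₂) y v) x w =
      -2 * (ℓ v * ⟪x + (p - x - p₂), w⟫ + ⟪x + (p - x - p₂), v⟫ * ℓ w +
        ℓ (x + (p - x - p₂)) * ⟪v, w⟫) := by
  rw [fderiv_fderiv_resonance_apply (differentiable_cubicSymbol ℓ)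
    (fun x => (hasFDerivAt_fderiv_cubicSymbol_apply ℓ v x).differentiableAt),
    (hasFDerivAt_fderiv_cubicSymbol_apply ℓ v _).fderiv,
    (hasFDerivAt_fderiv_cubicSymbol_apply ℓ v _).fderiv]
  simp only [map_sub, map_add, inner_sub_left, inner_add_left, add_apply, smul_apply, sub_apply,
    coe_innerSL_apply, smul_eq_mul]
  ring

end Calculus

theorem Matrix.two_le_rank_of_mul_sub_mul_ne_zero {m n K : Type*} [Fintype n] [CommRing K]
    [IsDomain K] (A : Matrix m n K) {a b : m} {c e : n}
    (h : A a c * A b e - A a e * A b c ≠ 0) : 2 ≤ A.rank :=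
  calc 2 = (A.submatrix ![a, b] ![c, e]).rank := by
        rw [rank_of_det_ne_zero (by rw [det_fin_two]; simpa using h), Fintype.card_fin]
    _ ≤ A.rank := rank_submatrix_le A _ _

section HalfHessian

variable {ι K : Type*} [DecidableEq ι] [CommRing K]

/-- Half the Hessian matrix of `ξ ↦ ξ i₀ * ‖ξ‖²` at `s`. -/
def halfHessianCubicSymbol (i₀ : ι) (s : ι → K) : Matrix ι ι K :=
  Matrix.of fun i j =>
    (if j = i₀ then s i else 0) + (if i = i₀ then s j else 0) + (if i = j then s i₀ else 0)

theorem halfHessianCubicSymbol_zero (i₀ : ι) : halfHessianCubicSymbol i₀ (0 : ι → K) = 0 := by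
  ext i j
  simp [halfHessianCubicSymbol]

variable [Fintype ι] [IsDomain K] {i₀ a b : ι}

theorem two_le_rank_halfHessianCubicSymbol (ha : a ≠ i₀) (hb : b ≠ i₀) (hab : a ≠ b)
    {s : ι → K} (hs : s ≠ 0) : 2 ≤ (halfHessianCubicSymbol i₀ s).rank := by
  by_cases h₀ : s i₀ = 0
  · obtain ⟨k, hk⟩ := Function.ne_iff.mp hs
    have hki₀ : k ≠ i₀ := by rintro rfl; exact hk h₀
    refine (halfHessianCubicSymbol i₀ s).two_le_rank_of_mul_sub_mul_ne_zero
      (a := i₀) (b := k) (c := i₀) (e := k) ?_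
    simpa [halfHessianCubicSymbol, h₀, hki₀, Ne.symm hki₀] using hk
  · refine (halfHessianCubicSymbol i₀ s).two_le_rank_of_mul_sub_mul_ne_zero
      (a := a) (b := b) (c := a) (e := b) ?_
    simpa [halfHessianCubicSymbol, ha, hb, hab, Ne.symm hab] using h₀

theorem rank_halfHessianCubicSymbol_le_one_iff (ha : a ≠ i₀) (hb : b ≠ i₀) (hab : a ≠ b)
    {s : ι → K} : (halfHessianCubicSymbol i₀ s).rank ≤ 1 ↔ s = 0 := by
  refine ⟨fun h => by_contra fun hs => ?_, fun hs => ?_⟩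
  · have := two_le_rank_halfHessianCubicSymbol ha hb hab hs
    omega
  · simp [hs, halfHessianCubicSymbol_zero]

end HalfHessian

theorem hessianMatrix_phiZK_resonance {d : ℕ} (h : 0 < d) (p p₂ p₁ : EuclideanSpace ℝ (Fin d)) :
    hessianMatrix d
        (fun q => phiZK d h p - phiZK d h q - phiZK d h p₂ - phiZK d h (p - q - p₂)) p₁ =
      (-2 : ℝ) • halfHessianCubicSymbol ⟨0, h⟩ (p₁ + (p - p₁ - p₂)).ofLp := by
  ext i j
  change fderiv ℝ (fun y => fderiv ℝ (resonance (cubicSymbol (EuclideanSpace.proj ⟨0, h⟩)) p p₂) y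
    (EuclideanSpace.single j 1)) p₁ (EuclideanSpace.single i 1) = _
  rw [fderiv_fderiv_resonance_cubicSymbol_apply]
  generalize p₁ + (p - p₁ - p₂) = s
  simp only [EuclideanSpace.inner_single_right, PiLp.proj_apply, PiLp.single_apply,
    halfHessianCubicSymbol, Matrix.smul_apply, Matrix.of_apply, conj_trivial, smul_eq_mul,
    one_mul]
  split_ifs <;> subst_vars <;> first | contradiction | ring

/-- semi-nondegeneracy of the Zakharov–Kuznetsov Hessian.
Let `d ≥ 3` and `φ(ξ) = ξ¹|ξ|²`. Fix `p, p₂ ∈ ℝ^d` and put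
`F(p₁) = φ(p) − φ(p₁) − φ(p₂) − φ(p − p₁ − p₂)`. Then for every `p₁`, writing
`p₃ := p − p₁ − p₂`, the Hessian matrix `D²F(p₁)` has rank at most `1` iff `p₁ + p₃ = 0`;
in particular, if `p₁ + p₃ ≠ 0` then its rank is at least `2`. -/
theorem ZK_hessian_semi_nondegeneracy (d : ℕ) (hd : 3 ≤ d)
    (p p₂ : EuclideanSpace ℝ (Fin d)) (p₁ : EuclideanSpace ℝ (Fin d)) :
    (Matrix.rank (hessianMatrix d
        (fun q => phiZK d (by omega) p - phiZK d (by omega) q - phiZK d (by omega) p₂ -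
          phiZK d (by omega) (p - q - p₂)) p₁) ≤ 1 ↔ p₁ + (p - p₁ - p₂) = 0) ∧
    (p₁ + (p - p₁ - p₂) ≠ 0 →
      2 ≤ Matrix.rank (hessianMatrix d
        (fun q => phiZK d (by omega) p - phiZK d (by omega) q - phiZK d (by omega) p₂ -
          phiZK d (by omega) (p - q - p₂)) p₁)) := by
  have h₀ : 0 < d := by omega
  have h₁ : (⟨1, by omega⟩ : Fin d) ≠ ⟨0, h₀⟩ := by simp [Fin.ext_iff]
  have h₂ : (⟨2, by omega⟩ : Fin d) ≠ ⟨0, h₀⟩ := by simp [Fin.ext_iff]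
  have h₁₂ : (⟨1, by omega⟩ : Fin d) ≠ ⟨2, by omega⟩ := by simp [Fin.ext_iff]
  rw [ne_eq, hessianMatrix_phiZK_resonance h₀, Matrix.rank_smul_of_mem_nonZeroDivisors _
    (mem_nonZeroDivisors_of_ne_zero (by norm_num)), ← WithLp.ofLp_eq_zero]
  exact ⟨rank_halfHessianCubicSymbol_le_one_iff h₁ h₂ h₁₂,
    two_le_rank_halfHessianCubicSymbol h₁ h₂ h₁₂⟩
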